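/- arXiv:1207.2102 — 10 statements merged into one kernel-verified Lean document; each statement's English description precedes it below -/
import Mathlib

section
/- Let Q[M,L] = ℚ[x1,x2,x3,d1,d2,d3,L] be the polynomial ring in seven variables over ℚ, with the action of the symmetric group S3 defined on generators by σ(x_i) = x_{σ(i)}, σ(d_i) = d_{σ(i)}, σ(L) = L, and let Sym Q[M,L] be the subring of polynomials invariant under this action. Let I_C be the ideal of Q[M,L] generated by p1, p2, p3. Then the ideal I_C ∩ Sym Q[M,L] of the ring Sym Q[M,L] is finitely generated: the seven polynomials p̃2, p̃3, p̃4, p̃5, p̃6, p̃7, p̃8 belong to it and generate it as an ideal of Sym Q[M,L]. -/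
open MvPolynomial

noncomputable section

/-- Variables: `0,1,2 ↦ x₁,x₂,x₃`, `3,4,5 ↦ d₁,d₂,d₃`, `6 ↦ L`. -/
abbrev CuboidRing : Type := MvPolynomial (Fin 7) ℚ

/-- The permutation of the seven variables induced by `σ ∈ S₃`:
it permutes the `x`-variables and the `d`-variables simultaneously and fixes `L`. -/
def liftPerm (σ : Equiv.Perm (Fin 3)) : Fin 7 → Fin 7 :=
  ![⟨σ 0, by have := (σ 0).isLt; omega⟩, ⟨σ 1, by have := (σ 1).isLt; omega⟩,
    ⟨σ 2, by have := (σ 2).isLt; omega⟩,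
    ⟨(σ 0 : ℕ) + 3, by have := (σ 0).isLt; omega⟩,
    ⟨(σ 1 : ℕ) + 3, by have := (σ 1).isLt; omega⟩,
    ⟨(σ 2 : ℕ) + 3, by have := (σ 2).isLt; omega⟩, ⟨6, by omega⟩]

/-- The subring of multisymmetric polynomials, i.e. polynomials invariant under the
simultaneous `S₃`-permutation of the `x`- and `d`-variables. -/
def SymQML : Subring CuboidRing where
  carrier := {p | ∀ σ : Equiv.Perm (Fin 3), rename (liftPerm σ) p = p}
  zero_mem' := fun σ => map_zero _
  one_mem' := fun σ => map_one _
  add_mem' := fun {a b} ha hb σ => by rw [map_add, ha σ, hb σ]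
  mul_mem' := fun {a b} ha hb σ => by rw [map_mul, ha σ, hb σ]
  neg_mem' := fun {a} ha σ => by rw [map_neg, ha σ]

def pc1 : CuboidRing := X 1 ^ 2 + X 2 ^ 2 - X 3 ^ 2
def pc2 : CuboidRing := X 2 ^ 2 + X 0 ^ 2 - X 4 ^ 2
def pc3 : CuboidRing := X 0 ^ 2 + X 1 ^ 2 - X 5 ^ 2

/-- The seven multisymmetric polynomials `p̃₂, …, p̃₈`. -/
def tpC : Fin 7 → CuboidRing :=
  ![pc1 + pc2 + pc3,
    X 3 * pc1 + X 4 * pc2 + X 5 * pc3,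
    X 0 * pc1 + X 1 * pc2 + X 2 * pc3,
    X 0 * X 3 * pc1 + X 1 * X 4 * pc2 + X 2 * X 5 * pc3,
    X 0 ^ 2 * pc1 + X 1 ^ 2 * pc2 + X 2 ^ 2 * pc3,
    X 3 ^ 2 * pc1 + X 4 ^ 2 * pc2 + X 5 ^ 2 * pc3,
    X 0 ^ 2 * X 3 ^ 2 * pc1 + X 1 ^ 2 * X 4 ^ 2 * pc2 + X 2 ^ 2 * X 5 ^ 2 * pc3]

/-- The Euler cuboid ideal `I_C = ⟨p₁, p₂, p₃⟩`. -/
def IC : Ideal CuboidRing := Ideal.span {pc1, pc2, pc3}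

/-- The ideal `I_C ∩ Sym ℚ[M,L]` of the ring `Sym ℚ[M,L]`,
realized as the pullback of `I_C` along the inclusion of the subring of
multisymmetric polynomials. -/
def ICsym : Ideal SymQML := IC.comap SymQML.subtype

/-!
Write a multisymmetric `z ∈ I_C` as `z = ∑ aᵢ pᵢ`. Averaging over `S₃` replaces the `aᵢ` by an
equivariant family `bᵢ`, `σ(bᵢ) = b_{σ i}`, so everything is determined by `b₀`, which is
invariant under the stabiliser `(1 2)` of `0`. Such polynomials lie in `Sym[x₀, d₀]`: the
`(1 2)`-invariants in `x₁, x₂, d₁, d₂` are generated by the sums `x₁ᵃd₁ᵇ + x₂ᵃd₂ᵇ`, which are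
multisymmetric power sums minus `x₀ᵃd₀ᵇ`. By Newton's identities for `x₀` and for `x₀ + t d₀`,
`Sym[x₀, d₀]` is spanned over `Sym` by `1, d₀, x₀, x₀d₀, x₀², d₀², x₀²d₀²`. Expanding `b₀` in these
seven generators and transporting the expansion to every `bᵢ` writes `z` as a `Sym`-combination
of `p̃₂, …, p̃₈`.
-/

@[simp, norm_cast]
theorem SubringClass.coe_ofNat {S R : Type*} [Ring R] [SetLike S R] [SubringClass S R] (s : S)
    (n : ℕ) [n.AtLeastTwo] : ((ofNat(n) : s) : R) = ofNat(n) :=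
  rfl

def powerSum {ι R : Type*} [Fintype ι] [CommSemiring R] (x d : ι → R) (a b : ℕ) : R :=
  ∑ i, x i ^ a * d i ^ b

theorem powerSum_comm {ι R : Type*} [Fintype ι] [CommSemiring R] (x d : ι → R) (a b : ℕ) :
    powerSum d x a b = powerSum x d b a := by
  simp only [powerSum, mul_comm]

def xVar (i : Fin 3) : CuboidRing := X ⟨i, by omega⟩
def dVar (i : Fin 3) : CuboidRing := X ⟨(i : ℕ) + 3, by omega⟩

def pc (i : Fin 3) : CuboidRing := ∑ j, xVar j ^ 2 - xVar i ^ 2 - dVar i ^ 2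

theorem pc_zero : pc 0 = pc1 := by
  unfold pc pc1 xVar dVar; simp [Fin.sum_univ_three]; ring

theorem pc_one : pc 1 = pc2 := by
  unfold pc pc2 xVar dVar; simp [Fin.sum_univ_three]; ring

theorem pc_two : pc 2 = pc3 := by
  unfold pc pc3 xVar dVar; simp [Fin.sum_univ_three]

theorem IC_eq_span_range_pc : IC = Ideal.span (Set.range pc) := by
  rw [IC]
  congr 1
  ext p
  simp [Fin.exists_fin_succ, pc_zero, pc_one, pc_two, eq_comm]

theorem rename_liftPerm_xVar (σ : Equiv.Perm (Fin 3)) (i : Fin 3) :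
    rename (liftPerm σ) (xVar i) = xVar (σ i) := by
  rw [xVar, rename_X]; congr 1; fin_cases i <;> rfl

theorem rename_liftPerm_dVar (σ : Equiv.Perm (Fin 3)) (i : Fin 3) :
    rename (liftPerm σ) (dVar i) = dVar (σ i) := by
  rw [dVar, rename_X]; congr 1; fin_cases i <;> rfl

theorem rename_liftPerm_pc (σ : Equiv.Perm (Fin 3)) (i : Fin 3) :
    rename (liftPerm σ) (pc i) = pc (σ i) := by
  simp only [pc, map_sub, map_sum, map_pow, rename_liftPerm_xVar, rename_liftPerm_dVar,
    Equiv.sum_comp σ (fun j => xVar j ^ 2)]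

theorem liftPerm_mul : ∀ σ τ : Equiv.Perm (Fin 3), liftPerm (τ * σ) = liftPerm τ ∘ liftPerm σ := by
  decide

theorem rename_liftPerm_mul (σ τ : Equiv.Perm (Fin 3)) (p : CuboidRing) :
    rename (liftPerm (τ * σ)) p = rename (liftPerm τ) (rename (liftPerm σ) p) := by
  rw [rename_rename, liftPerm_mul]

@[simp]
theorem rename_liftPerm_coe (σ : Equiv.Perm (Fin 3)) (s : SymQML) :
    rename (liftPerm σ) (s : CuboidRing) = s :=
  s.2 σ

theorem C_mem_SymQML (a : ℚ) : C a ∈ SymQML := fun _ => rename_C _ a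

theorem sum_mem_SymQML {f : Fin 3 → CuboidRing}
    (hf : ∀ σ i, rename (liftPerm σ) (f i) = f (σ i)) : ∑ i, f i ∈ SymQML := fun σ => by
  simp only [map_sum, hf, Equiv.sum_comp σ f]

theorem powerSum_mem_SymQML (a b : ℕ) : powerSum xVar dVar a b ∈ SymQML :=
  sum_mem_SymQML fun σ i => by
    simp only [map_mul, map_pow, rename_liftPerm_xVar, rename_liftPerm_dVar]

def tpCWeight : Fin 7 → Fin 3 → CuboidRing :=
  ![1, dVar, xVar, xVar * dVar, xVar ^ 2, dVar ^ 2, xVar ^ 2 * dVar ^ 2]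

theorem rename_liftPerm_tpCWeight (σ : Equiv.Perm (Fin 3)) (k : Fin 7) (i : Fin 3) :
    rename (liftPerm σ) (tpCWeight k i) = tpCWeight k (σ i) := by
  fin_cases k <;>
    simp [tpCWeight, rename_liftPerm_xVar, rename_liftPerm_dVar]

theorem tpC_eq_sum (k : Fin 7) : tpC k = ∑ i, tpCWeight k i * pc i := by
  fin_cases k <;>
    simp [tpC, tpCWeight, Fin.sum_univ_three, pc_zero, pc_one, pc_two] <;> rfl

theorem tpC_mem_SymQML (k : Fin 7) : tpC k ∈ SymQML :=
  tpC_eq_sum k ▸ sum_mem_SymQML fun σ i => by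
    rw [map_mul, rename_liftPerm_tpCWeight, rename_liftPerm_pc]

theorem tpC_mem_IC (k : Fin 7) : tpC k ∈ IC := by
  rw [tpC_eq_sum, IC_eq_span_range_pc]
  exact Ideal.sum_mem _ fun i _ => Ideal.mul_mem_left _ _ (Ideal.subset_span ⟨i, rfl⟩)

def weightSpan : Submodule SymQML CuboidRing :=
  Submodule.span SymQML (Set.range fun k => tpCWeight k 0)

theorem generators_mem_weightSpan :
    1 ∈ weightSpan ∧ dVar 0 ∈ weightSpan ∧ xVar 0 ∈ weightSpan ∧ xVar 0 * dVar 0 ∈ weightSpan ∧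
      xVar 0 ^ 2 ∈ weightSpan ∧ dVar 0 ^ 2 ∈ weightSpan ∧
      xVar 0 ^ 2 * dVar 0 ^ 2 ∈ weightSpan := by
  have h k : tpCWeight k 0 ∈ weightSpan := Submodule.subset_span ⟨k, rfl⟩
  exact ⟨h 0, h 1, h 2, h 3, h 4, h 5, h 6⟩

theorem mul_mem_weightSpan (s : SymQML) {w : CuboidRing} (hw : w ∈ weightSpan) :
    (s : CuboidRing) * w ∈ weightSpan :=
  weightSpan.smul_mem s hw

theorem mem_weightSpan_of_six_mul {w : CuboidRing} (h : 6 * w ∈ weightSpan) :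
    w ∈ weightSpan := by
  convert mul_mem_weightSpan ⟨_, C_mem_SymQML 6⁻¹⟩ h using 1
  rw [← mul_assoc, ← map_ofNat C 6, ← C_mul]
  norm_num

/-- Newton's identities: `x₀` is a root of `∏ (t - xᵢ) = t³ - e₁t² + e₂t - e₃`, where
`e₁ = p₁`, `2e₂ = p₁² - p₂` and `6e₃ = p₁³ - 3p₁p₂ + 2p₃`. -/
theorem pow_three_mul_mem_weightSpan {x d : Fin 3 → CuboidRing}
    (hp : ∀ a b, powerSum x d a b ∈ SymQML) {w : CuboidRing} (h0 : w ∈ weightSpan)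
    (h1 : x 0 * w ∈ weightSpan) (h2 : x 0 ^ 2 * w ∈ weightSpan) :
    x 0 ^ 3 * w ∈ weightSpan := by
  let p (a b : ℕ) : SymQML := ⟨powerSum x d a b, hp a b⟩
  have key : 6 * (x 0 ^ 3 * w) =
      ((p 1 0 ^ 3 - 3 * p 1 0 * p 2 0 + 2 * p 3 0 : SymQML) : CuboidRing) * w
      - ((3 * (p 1 0 ^ 2 - p 2 0) : SymQML) : CuboidRing) * (x 0 * w)
      + ((6 * p 1 0 : SymQML) : CuboidRing) * (x 0 ^ 2 * w) := by
    push_cast [p]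
    simp only [powerSum, Fin.sum_univ_three]; ring
  refine mem_weightSpan_of_six_mul ?_
  rw [key]
  exact add_mem (sub_mem (mul_mem_weightSpan _ h0) (mul_mem_weightSpan _ h1))
    (mul_mem_weightSpan _ h2)

/-- The `t`-coefficient of the identity above for `x + t d`. -/
theorem sq_mul_mem_weightSpan {x d : Fin 3 → CuboidRing}
    (hp : ∀ a b, powerSum x d a b ∈ SymQML) (h1 : 1 ∈ weightSpan) (hx : x 0 ∈ weightSpan)
    (hd : d 0 ∈ weightSpan) (hxd : x 0 * d 0 ∈ weightSpan) (hx2 : x 0 ^ 2 ∈ weightSpan) :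
    x 0 ^ 2 * d 0 ∈ weightSpan := by
  let p (a b : ℕ) : SymQML := ⟨powerSum x d a b, hp a b⟩
  have key : 6 * (x 0 ^ 2 * d 0) =
      ((2 * p 2 1 - 2 * p 1 0 * p 1 1 + (p 1 0 ^ 2 - p 2 0) * p 0 1 : SymQML) : CuboidRing) * 1
      + ((2 * p 1 1 - 2 * p 1 0 * p 0 1 : SymQML) : CuboidRing) * x 0
      - ((p 1 0 ^ 2 - p 2 0 : SymQML) : CuboidRing) * d 0
      + ((4 * p 1 0 : SymQML) : CuboidRing) * (x 0 * d 0)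
      + ((2 * p 0 1 : SymQML) : CuboidRing) * x 0 ^ 2 := by
    push_cast [p]
    simp only [powerSum, Fin.sum_univ_three]; ring
  refine mem_weightSpan_of_six_mul ?_
  rw [key]
  exact add_mem (add_mem (sub_mem (add_mem (mul_mem_weightSpan _ h1) (mul_mem_weightSpan _ hx))
    (mul_mem_weightSpan _ hd)) (mul_mem_weightSpan _ hxd)) (mul_mem_weightSpan _ hx2)

theorem powerSum_dVar_xVar_mem_SymQML (a b : ℕ) : powerSum dVar xVar a b ∈ SymQML :=
  powerSum_comm xVar dVar a b ▸ powerSum_mem_SymQML b a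

theorem xVar_sq_mul_dVar_mem_weightSpan : xVar 0 ^ 2 * dVar 0 ∈ weightSpan :=
  let ⟨h1, hd, hx, hxd, hx2, _⟩ := generators_mem_weightSpan
  sq_mul_mem_weightSpan powerSum_mem_SymQML h1 hx hd hxd hx2

theorem xVar_mul_dVar_sq_mem_weightSpan : xVar 0 * dVar 0 ^ 2 ∈ weightSpan :=
  let ⟨h1, hd, hx, hxd, _, hd2, _⟩ := generators_mem_weightSpan
  mul_comm (dVar 0 ^ 2) (xVar 0) ▸ sq_mul_mem_weightSpan powerSum_dVar_xVar_mem_SymQML h1 hd hx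
    (mul_comm (xVar 0) (dVar 0) ▸ hxd) hd2

theorem mul_mem_weightSpan_of_forall {y : CuboidRing} (hy : ∀ k, y * tpCWeight k 0 ∈ weightSpan)
    {w : CuboidRing} (hw : w ∈ weightSpan) : y * w ∈ weightSpan := by
  induction hw using Submodule.span_induction with
  | mem _ h => obtain ⟨k, rfl⟩ := h; exact hy k
  | zero => simp
  | add _ _ _ _ h₁ h₂ => rw [mul_add]; exact add_mem h₁ h₂
  | smul s _ _ h => rw [mul_smul_comm]; exact weightSpan.smul_mem s h

theorem xVar_mul_mem_weightSpan {w : CuboidRing} (hw : w ∈ weightSpan) :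
    xVar 0 * w ∈ weightSpan := by
  obtain ⟨h1, hd, hx, hxd, hx2, hd2, hx2d2⟩ := generators_mem_weightSpan
  refine mul_mem_weightSpan_of_forall (fun k => ?_) hw
  fin_cases k <;> simp [tpCWeight]
  · exact hx
  · exact hxd
  · rwa [← sq]
  · rw [← mul_assoc, ← sq]; exact xVar_sq_mul_dVar_mem_weightSpan
  · simpa [pow_succ'] using pow_three_mul_mem_weightSpan powerSum_mem_SymQML h1
      (by simpa using hx) (by simpa using hx2)
  · exact xVar_mul_dVar_sq_mem_weightSpan
  · convert pow_three_mul_mem_weightSpan powerSum_mem_SymQML hd2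
      xVar_mul_dVar_sq_mem_weightSpan hx2d2 using 1
    ring

theorem dVar_mul_mem_weightSpan {w : CuboidRing} (hw : w ∈ weightSpan) :
    dVar 0 * w ∈ weightSpan := by
  obtain ⟨h1, hd, hx, hxd, hx2, hd2, hx2d2⟩ := generators_mem_weightSpan
  refine mul_mem_weightSpan_of_forall (fun k => ?_) hw
  fin_cases k <;> simp [tpCWeight]
  · exact hd
  · rwa [← sq]
  · rwa [mul_comm]
  · convert xVar_mul_dVar_sq_mem_weightSpan using 1; ring
  · convert xVar_sq_mul_dVar_mem_weightSpan using 1; ring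
  · simpa [pow_succ'] using pow_three_mul_mem_weightSpan powerSum_dVar_xVar_mem_SymQML h1
      (by simpa using hd) (by simpa using hd2)
  · convert pow_three_mul_mem_weightSpan powerSum_dVar_xVar_mem_SymQML hx2
      (mul_comm (xVar 0 ^ 2) (dVar 0) ▸ xVar_sq_mul_dVar_mem_weightSpan)
      (mul_comm (xVar 0 ^ 2) (dVar 0 ^ 2) ▸ hx2d2) using 1
    ring

theorem mem_adjoin_of_mem_SymQML {s : CuboidRing} (hs : s ∈ SymQML) (S : Set CuboidRing) :
    s ∈ Algebra.adjoin SymQML S :=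
  Subalgebra.algebraMap_mem _ (⟨s, hs⟩ : SymQML)

theorem mem_weightSpan_of_mem_adjoin {p : CuboidRing}
    (hp : p ∈ Algebra.adjoin SymQML {xVar 0, dVar 0}) : p ∈ weightSpan := by
  suffices ∀ w ∈ weightSpan, p * w ∈ weightSpan by
    simpa using this 1 generators_mem_weightSpan.1
  induction hp using Algebra.adjoin_induction with
  | mem _ h =>
    rcases h with rfl | rfl
    exacts [fun w => xVar_mul_mem_weightSpan, fun w => dVar_mul_mem_weightSpan]
  | algebraMap s => exact fun w => mul_mem_weightSpan s
  | add _ _ _ _ h₁ h₂ => intro w hw; rw [add_mul]; exact add_mem (h₁ w hw) (h₂ w hw)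
  | mul _ _ _ _ h₁ h₂ => intro w hw; rw [mul_assoc]; exact h₁ _ (h₂ w hw)

theorem polarizedPowerSum_mem_adjoin (a b : ℕ) :
    xVar 1 ^ a * dVar 1 ^ b + xVar 2 ^ a * dVar 2 ^ b ∈ Algebra.adjoin SymQML {xVar 0, dVar 0} := by
  have h : xVar 1 ^ a * dVar 1 ^ b + xVar 2 ^ a * dVar 2 ^ b =
      powerSum xVar dVar a b - xVar 0 ^ a * dVar 0 ^ b := by
    simp only [powerSum, Fin.sum_univ_three]; ring
  rw [h]
  exact sub_mem (mem_adjoin_of_mem_SymQML (powerSum_mem_SymQML a b) _)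
    (mul_mem (pow_mem (Algebra.subset_adjoin (by simp)) a)
      (pow_mem (Algebra.subset_adjoin (by simp)) b))

theorem symmetrizedMonomial_mem_adjoin (i j k l : ℕ) :
    xVar 1 ^ i * xVar 2 ^ j * dVar 1 ^ k * dVar 2 ^ l +
      xVar 2 ^ i * xVar 1 ^ j * dVar 2 ^ k * dVar 1 ^ l ∈
      Algebra.adjoin SymQML {xVar 0, dVar 0} := by
  have h : xVar 1 ^ i * xVar 2 ^ j * dVar 1 ^ k * dVar 2 ^ l +
      xVar 2 ^ i * xVar 1 ^ j * dVar 2 ^ k * dVar 1 ^ l =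
      (xVar 1 ^ i * dVar 1 ^ k + xVar 2 ^ i * dVar 2 ^ k) *
        (xVar 1 ^ j * dVar 1 ^ l + xVar 2 ^ j * dVar 2 ^ l) -
      (xVar 1 ^ (i + j) * dVar 1 ^ (k + l) + xVar 2 ^ (i + j) * dVar 2 ^ (k + l)) := by
    ring
  rw [h]
  exact sub_mem (mul_mem (polarizedPowerSum_mem_adjoin i k) (polarizedPowerSum_mem_adjoin j l))
    (polarizedPowerSum_mem_adjoin _ _)

theorem X_six_mem_SymQML : (X 6 : CuboidRing) ∈ SymQML := fun _ => by
  rw [rename_X]; rfl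

theorem liftPerm_swap_one_two : liftPerm (Equiv.swap 1 2) = ![0, 2, 1, 3, 5, 4, 6] := by
  decide

theorem monomial_add_rename_swap_mem_adjoin (u : Fin 7 →₀ ℕ) (a : ℚ) :
    monomial u a + rename (liftPerm (Equiv.swap 1 2)) (monomial u a) ∈
      Algebra.adjoin SymQML {xVar 0, dVar 0} := by
  have h : monomial u a + rename (liftPerm (Equiv.swap 1 2)) (monomial u a) =
      C a * X 6 ^ u 6 * xVar 0 ^ u 0 * dVar 0 ^ u 3 *
        (xVar 1 ^ u 1 * xVar 2 ^ u 2 * dVar 1 ^ u 4 * dVar 2 ^ u 5 +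
          xVar 2 ^ u 1 * xVar 1 ^ u 2 * dVar 2 ^ u 4 * dVar 1 ^ u 5) := by
    simp only [monomial_eq, Finsupp.prod_fintype _ _ (fun _ => pow_zero _), Fin.prod_univ_seven,
      map_mul, map_pow, rename_X, rename_C, liftPerm_swap_one_two]
    simp [xVar, dVar]
    ring
  have hx : xVar 0 ∈ Algebra.adjoin SymQML {xVar 0, dVar 0} := Algebra.subset_adjoin (by simp)
  have hd : dVar 0 ∈ Algebra.adjoin SymQML {xVar 0, dVar 0} := Algebra.subset_adjoin (by simp)
  rw [h]
  refine mul_mem (mul_mem (mul_mem ?_ (pow_mem hx _)) (pow_mem hd _))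
    (symmetrizedMonomial_mem_adjoin _ _ _ _)
  exact mem_adjoin_of_mem_SymQML (mul_mem (C_mem_SymQML a) (pow_mem X_six_mem_SymQML _)) _

theorem add_rename_swap_mem_adjoin (p : CuboidRing) :
    p + rename (liftPerm (Equiv.swap 1 2)) p ∈ Algebra.adjoin SymQML {xVar 0, dVar 0} := by
  induction p using MvPolynomial.induction_on' with
  | monomial u a => exact monomial_add_rename_swap_mem_adjoin u a
  | add p q hp hq => rw [map_add, add_add_add_comm]; exact add_mem hp hq

theorem mem_adjoin_of_rename_swap_eq {p : CuboidRing}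
    (hp : rename (liftPerm (Equiv.swap 1 2)) p = p) :
    p ∈ Algebra.adjoin SymQML {xVar 0, dVar 0} := by
  have h := mul_mem (mem_adjoin_of_mem_SymQML (C_mem_SymQML 2⁻¹) _) (add_rename_swap_mem_adjoin p)
  rw [hp, ← two_mul, ← mul_assoc, ← map_ofNat C 2, ← C_mul] at h
  simpa using h

theorem exists_equivariant_coeffs {z : CuboidRing} (hz : z ∈ IC) (hsym : z ∈ SymQML) :
    ∃ b : Fin 3 → CuboidRing,
      (∀ σ i, rename (liftPerm σ) (b i) = b (σ i)) ∧ z = ∑ i, b i * pc i := by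
  obtain ⟨a, rfl⟩ := Ideal.mem_span_range_iff_exists_fun.1 (IC_eq_span_range_pc ▸ hz)
  refine ⟨fun i => (6 : ℚ)⁻¹ • ∑ σ : Equiv.Perm (Fin 3), rename (liftPerm σ) (a (σ⁻¹ i)),
    fun τ i => ?_, ?_⟩
  · simp only [map_smul, map_sum, ← rename_liftPerm_mul]
    congr 1
    exact Fintype.sum_equiv (Equiv.mulLeft τ) _ _ fun σ => by simp
  · have hσ (σ : Equiv.Perm (Fin 3)) :
        ∑ i, rename (liftPerm σ) (a (σ⁻¹ i)) * pc i = ∑ i, a i * pc i := by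
      rw [← hsym σ, map_sum]
      exact (Fintype.sum_equiv σ _ _ fun j => by simp [rename_liftPerm_pc]).symm
    simp only [smul_mul_assoc, Finset.sum_mul, ← Finset.smul_sum]
    rw [Finset.sum_comm, Finset.sum_congr rfl fun σ _ => hσ σ, Finset.sum_const, Finset.card_univ,
      Fintype.card_perm, Fintype.card_fin, ← Nat.cast_smul_eq_nsmul ℚ, smul_smul]
    norm_num [Nat.factorial]

theorem exists_eq_sum_mul_tpC {z : CuboidRing} (hz : z ∈ IC) (hsym : z ∈ SymQML) :
    ∃ c : Fin 7 → SymQML, z = ∑ k, (c k : CuboidRing) * tpC k := by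
  obtain ⟨b, hb, rfl⟩ := exists_equivariant_coeffs hz hsym
  -- `(1 2)` fixes `0`, so `b 0` is `(1 2)`-invariant.
  have hb0 : b 0 ∈ weightSpan :=
    mem_weightSpan_of_mem_adjoin (mem_adjoin_of_rename_swap_eq (hb _ _))
  obtain ⟨c, hc⟩ := (Submodule.mem_span_range_iff_exists_fun _).1 hb0
  have hb (i : Fin 3) : b i = ∑ k, (c k : CuboidRing) * tpCWeight k i := by
    calc b i = b (Equiv.swap 0 i 0) := by rw [Equiv.swap_apply_left]
      _ = rename (liftPerm (Equiv.swap 0 i)) (b 0) := (hb _ _).symm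
      _ = ∑ k, (c k : CuboidRing) * tpCWeight k (Equiv.swap 0 i 0) := by
        simp [← hc, Subring.smul_def, rename_liftPerm_coe, rename_liftPerm_tpCWeight]
      _ = _ := by rw [Equiv.swap_apply_left]
  refine ⟨c, ?_⟩
  simp only [tpC_eq_sum, hb, Finset.sum_mul, Finset.mul_sum, mul_assoc]
  exact Finset.sum_comm

theorem ICsym_is_generated_by_the_seven_polynomials :
    (∀ i : Fin 7, tpC i ∈ SymQML) ∧
    ∀ q : Fin 7 → SymQML, (∀ i : Fin 7, (q i : CuboidRing) = tpC i) →
      (∀ i : Fin 7, q i ∈ ICsym) ∧ ICsym = Ideal.span (Set.range q) := by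
  refine ⟨tpC_mem_SymQML, fun q hq => ?_⟩
  have hmem (i : Fin 7) : q i ∈ ICsym := by
    show (q i : CuboidRing) ∈ IC
    rw [hq]
    exact tpC_mem_IC i
  refine ⟨hmem, le_antisymm (fun z hz => ?_) (Ideal.span_le.2 (Set.range_subset_iff.2 hmem))⟩
  obtain ⟨c, hc⟩ := exists_eq_sum_mul_tpC hz z.2
  refine Ideal.mem_span_range_iff_exists_fun.2 ⟨c, Subtype.ext ?_⟩
  simpa [hq] using hc.symm
end
end

section
/- Every rational solution (x1,x2,x3,d1,d2,d3,L) of the Euler factor equations p̃2 = p̃3 = p̃4 = p̃5 = p̃6 = p̃7 = p̃8 = 0 satisfying x1 > 0, x2 > 0, x3 > 0, d1 > 0, d2 > 0, d3 > 0 is a solution of the Euler cuboid equations p1 = p2 = p3 = 0. -/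
/-!
Each cuboid polynomial has the form `pᵢ = X - (xᵢ² + dᵢ²)` with `X = x1² + x2² + x3²`. Hence
`∑ pᵢ² = X ∑ pᵢ - ∑ pᵢ (xᵢ² + dᵢ²) = X p̃2 - p̃6 - p̃7 = 0`, and a vanishing sum of rational
squares has vanishing terms.
-/

namespace Finset

variable {ι R : Type*} {s : Finset ι} {p c : ι → R} {X : R}

theorem sum_sq_eq_zero_of_add_eq_const [CommRing R] (hp : ∑ i ∈ s, p i = 0)
    (hpc : ∑ i ∈ s, p i * c i = 0) (hX : ∀ i ∈ s, p i + c i = X) :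
    ∑ i ∈ s, p i ^ 2 = 0 :=
  calc ∑ i ∈ s, p i ^ 2 = ∑ i ∈ s, (X * p i - p i * c i) :=
        sum_congr rfl fun i hi ↦ by rw [← hX i hi]; ring
    _ = 0 := by rw [sum_sub_distrib, ← mul_sum, hp, hpc, mul_zero, sub_zero]

theorem eq_zero_of_sum_eq_zero_of_add_eq_const [CommRing R] [LinearOrder R] [IsStrictOrderedRing R]
    (hp : ∑ i ∈ s, p i = 0) (hpc : ∑ i ∈ s, p i * c i = 0) (hX : ∀ i ∈ s, p i + c i = X) :
    ∀ i ∈ s, p i = 0 := fun i hi ↦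
  pow_eq_zero_iff two_ne_zero |>.mp <|
    (sum_eq_zero_iff_of_nonneg fun _ _ ↦ sq_nonneg _).mp
      (sum_sq_eq_zero_of_add_eq_const hp hpc hX) i hi

end Finset

theorem euler_factor_equations_imply_cuboid_equations_general
    (x1 x2 x3 d1 d2 d3 : ℚ)
    (h2 : (x2^2 + x3^2 - d1^2) + (x3^2 + x1^2 - d2^2) + (x1^2 + x2^2 - d3^2) = 0)
    (h6 : x1^2 * (x2^2 + x3^2 - d1^2) + x2^2 * (x3^2 + x1^2 - d2^2) + x3^2 * (x1^2 + x2^2 - d3^2) = 0)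
    (h7 : d1^2 * (x2^2 + x3^2 - d1^2) + d2^2 * (x3^2 + x1^2 - d2^2) + d3^2 * (x1^2 + x2^2 - d3^2) = 0)
    : (x2^2 + x3^2 - d1^2) = 0 ∧ (x3^2 + x1^2 - d2^2) = 0 ∧ (x1^2 + x2^2 - d3^2) = 0 := by
  let p : Fin 3 → ℚ := ![x2^2 + x3^2 - d1^2, x3^2 + x1^2 - d2^2, x1^2 + x2^2 - d3^2]
  let c : Fin 3 → ℚ := ![x1^2 + d1^2, x2^2 + d2^2, x3^2 + d3^2]
  have hp : ∑ i, p i = 0 := by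
    simpa [Fin.sum_univ_three, p] using h2
  have hpc : ∑ i, p i * c i = 0 := by
    simp only [Fin.sum_univ_three, p, c, Matrix.cons_val_zero, Matrix.cons_val_one,
      Matrix.cons_val_two, Matrix.head_cons, Matrix.tail_cons]
    linear_combination h6 + h7
  have hX : ∀ i ∈ Finset.univ, p i + c i = x1^2 + x2^2 + x3^2 := by
    intro i _
    fin_cases i <;> simp only [p, c, Fin.zero_eta, Fin.mk_one, Fin.reduceFinMk, Matrix.cons_val_zero,
      Matrix.cons_val_one, Matrix.cons_val_two, Matrix.head_cons, Matrix.tail_cons] <;> ring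
  have hzero := Finset.eq_zero_of_sum_eq_zero_of_add_eq_const hp hpc hX
  exact ⟨hzero 0 (Finset.mem_univ _), hzero 1 (Finset.mem_univ _), hzero 2 (Finset.mem_univ _)⟩

theorem euler_factor_equations_imply_cuboid_equations
    (x1 x2 x3 d1 d2 d3 L : ℚ)
    (hx1 : 0 < x1)
    (hx2 : 0 < x2)
    (hx3 : 0 < x3)
    (hd1 : 0 < d1)
    (hd2 : 0 < d2)
    (hd3 : 0 < d3)
    (h2 : (x2^2 + x3^2 - d1^2) + (x3^2 + x1^2 - d2^2) + (x1^2 + x2^2 - d3^2) = 0)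
    (h3 : d1 * (x2^2 + x3^2 - d1^2) + d2 * (x3^2 + x1^2 - d2^2) + d3 * (x1^2 + x2^2 - d3^2) = 0)
    (h4 : x1 * (x2^2 + x3^2 - d1^2) + x2 * (x3^2 + x1^2 - d2^2) + x3 * (x1^2 + x2^2 - d3^2) = 0)
    (h5 : x1 * d1 * (x2^2 + x3^2 - d1^2) + x2 * d2 * (x3^2 + x1^2 - d2^2) + x3 * d3 * (x1^2 + x2^2 - d3^2) = 0)
    (h6 : x1^2 * (x2^2 + x3^2 - d1^2) + x2^2 * (x3^2 + x1^2 - d2^2) + x3^2 * (x1^2 + x2^2 - d3^2) = 0)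
    (h7 : d1^2 * (x2^2 + x3^2 - d1^2) + d2^2 * (x3^2 + x1^2 - d2^2) + d3^2 * (x1^2 + x2^2 - d3^2) = 0)
    (h8 : x1^2 * d1^2 * (x2^2 + x3^2 - d1^2) + x2^2 * d2^2 * (x3^2 + x1^2 - d2^2) + x3^2 * d3^2 * (x1^2 + x2^2 - d3^2) = 0)
    : (x2^2 + x3^2 - d1^2) = 0 ∧ (x3^2 + x1^2 - d2^2) = 0 ∧ (x1^2 + x2^2 - d3^2) = 0 :=
  euler_factor_equations_imply_cuboid_equations_general x1 x2 x3 d1 d2 d3 h2 h6 h7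
end

section
/- Every rational solution (x1,x2,x3,d1,d2,d3,L) of the perfect cuboid factor equations p̃1 = p̃2 = p̃3 = p̃4 = p̃5 = p̃6 = p̃7 = p̃8 = 0 satisfying x1 > 0, x2 > 0, x3 > 0, d1 > 0, d2 > 0, d3 > 0 is a solution of the perfect cuboid equations p0 = p1 = p2 = p3 = 0. -/
open Matrix

/-!
Writing `S = x1² + x2² + x3²`, each cuboid polynomial is `pᵢ = S - (xᵢ² + dᵢ²)`, so
`p1² + p2² + p3² = S·p̃2 - p̃6 - p̃7 = 0`, and a vanishing sum of rational squares forces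
`p1 = p2 = p3 = 0`.
-/

theorem Finset.eq_zero_of_eq_sub_of_sum_eq_zero {ι R : Type*} [CommRing R] [LinearOrder R]
    [IsStrictOrderedRing R] (s : Finset ι) (p a : ι → R) (c : R)
    (hp : ∀ i ∈ s, p i = c - a i) (hsum : ∑ i ∈ s, p i = 0)
    (hsum_mul : ∑ i ∈ s, a i * p i = 0) : ∀ i ∈ s, p i = 0 := by
  refine (Finset.sum_mul_self_eq_zero_iff s p).mp ?_
  calc ∑ i ∈ s, p i * p i
      = ∑ i ∈ s, (c - a i) * p i := Finset.sum_congr rfl fun i hi ↦ by rw [← hp i hi]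
    _ = c * ∑ i ∈ s, p i - ∑ i ∈ s, a i * p i := by
        simp only [sub_mul, Finset.sum_sub_distrib, Finset.mul_sum]
    _ = 0 := by rw [hsum, hsum_mul, mul_zero, sub_zero]

theorem perfect_factor_equations_imply_cuboid_equations_general
    (x1 x2 x3 d1 d2 d3 L : ℚ)
    (h1 : (x1^2 + x2^2 + x3^2 - L^2) = 0)
    (h2 : (x2^2 + x3^2 - d1^2) + (x3^2 + x1^2 - d2^2) + (x1^2 + x2^2 - d3^2) = 0)
    (h6 : x1^2 * (x2^2 + x3^2 - d1^2) + x2^2 * (x3^2 + x1^2 - d2^2) + x3^2 * (x1^2 + x2^2 - d3^2) = 0)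
    (h7 : d1^2 * (x2^2 + x3^2 - d1^2) + d2^2 * (x3^2 + x1^2 - d2^2) + d3^2 * (x1^2 + x2^2 - d3^2) = 0)
    : (x1^2 + x2^2 + x3^2 - L^2) = 0 ∧ (x2^2 + x3^2 - d1^2) = 0 ∧ (x3^2 + x1^2 - d2^2) = 0 ∧ (x1^2 + x2^2 - d3^2) = 0 := by
  have hp := Finset.univ.eq_zero_of_eq_sub_of_sum_eq_zero
    ![x2^2 + x3^2 - d1^2, x3^2 + x1^2 - d2^2, x1^2 + x2^2 - d3^2]
    ![x1^2 + d1^2, x2^2 + d2^2, x3^2 + d3^2] (x1^2 + x2^2 + x3^2)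
    (by intro i _; fin_cases i <;> simp <;> ring)
    (by simpa [Fin.sum_univ_three] using h2)
    (by simp only [Fin.sum_univ_three, cons_val]; linear_combination h6 + h7)
  exact ⟨h1, hp 0 (by simp), hp 1 (by simp), hp 2 (by simp)⟩

theorem perfect_factor_equations_imply_cuboid_equations
    (x1 x2 x3 d1 d2 d3 L : ℚ)
    (hx1 : 0 < x1)
    (hx2 : 0 < x2)
    (hx3 : 0 < x3)
    (hd1 : 0 < d1)
    (hd2 : 0 < d2)
    (hd3 : 0 < d3)
    (h1 : (x1^2 + x2^2 + x3^2 - L^2) = 0)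
    (h2 : (x2^2 + x3^2 - d1^2) + (x3^2 + x1^2 - d2^2) + (x1^2 + x2^2 - d3^2) = 0)
    (h3 : d1 * (x2^2 + x3^2 - d1^2) + d2 * (x3^2 + x1^2 - d2^2) + d3 * (x1^2 + x2^2 - d3^2) = 0)
    (h4 : x1 * (x2^2 + x3^2 - d1^2) + x2 * (x3^2 + x1^2 - d2^2) + x3 * (x1^2 + x2^2 - d3^2) = 0)
    (h5 : x1 * d1 * (x2^2 + x3^2 - d1^2) + x2 * d2 * (x3^2 + x1^2 - d2^2) + x3 * d3 * (x1^2 + x2^2 - d3^2) = 0)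
    (h6 : x1^2 * (x2^2 + x3^2 - d1^2) + x2^2 * (x3^2 + x1^2 - d2^2) + x3^2 * (x1^2 + x2^2 - d3^2) = 0)
    (h7 : d1^2 * (x2^2 + x3^2 - d1^2) + d2^2 * (x3^2 + x1^2 - d2^2) + d3^2 * (x1^2 + x2^2 - d3^2) = 0)
    (h8 : x1^2 * d1^2 * (x2^2 + x3^2 - d1^2) + x2^2 * d2^2 * (x3^2 + x1^2 - d2^2) + x3^2 * d3^2 * (x1^2 + x2^2 - d3^2) = 0)
    : (x1^2 + x2^2 + x3^2 - L^2) = 0 ∧ (x2^2 + x3^2 - d1^2) = 0 ∧ (x3^2 + x1^2 - d2^2) = 0 ∧ (x1^2 + x2^2 - d3^2) = 0 :=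
  perfect_factor_equations_imply_cuboid_equations_general x1 x2 x3 d1 d2 d3 L h1 h2 h6 h7
end

section
/- If rational numbers x1,x2,x3,d1,d2,d3 satisfy the Euler factor equations p̃2 = p̃3 = p̃4 = p̃5 = p̃6 = p̃7 = p̃8 = 0 and the 3×7 matrix N whose i-th row is (1, d_i, x_i, x_i·d_i, x_i², d_i², x_i²·d_i²) has rank N = 1, then p1 = p2 = p3 = 0. -/
open Matrix

/-! Since `N` has rank one and an all-ones column, every column of `N` is constant, so all rows
coincide: `x1 = x2 = x3` and `d1 = d2 = d3`. Then `p1 = p2 = p3`, and `p̃2 = 3 p1 = 0`. -/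

theorem Matrix.row_eq_of_rank_le_one_of_col_eq_one {m n K : Type*} [Fintype m] [Fintype n]
    [Field K] (A : Matrix m n K) (hA : A.rank ≤ 1) (j₀ : n) (hj₀ : ∀ i, A i j₀ = 1) (i i' : m) :
    A i = A i' := by
  have : Nonempty m := ⟨i⟩
  have hone : A.col j₀ = 1 := funext hj₀
  have hline : K ∙ (1 : m → K) = Submodule.span K (Set.range A.col) := by
    refine Submodule.eq_of_le_of_finrank_le ?_ ?_
    · exact (Submodule.span_singleton_le_iff_mem _ _).2 (hone ▸ Submodule.subset_span ⟨j₀, rfl⟩)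
    · rw [← rank_eq_finrank_span_cols, finrank_span_singleton one_ne_zero]
      exact hA
  funext j
  obtain ⟨c, hc⟩ := Submodule.mem_span_singleton.1
    (hline ▸ Submodule.subset_span ⟨j, rfl⟩ : A.col j ∈ K ∙ (1 : m → K))
  have hcol : ∀ k, A k j = c := fun k => by simpa using (congrFun hc k).symm
  rw [hcol, hcol]

theorem rank_one_case_euler_general
    (x1 x2 x3 d1 d2 d3 : ℚ)
    (h2 : (x2^2 + x3^2 - d1^2) + (x3^2 + x1^2 - d2^2) + (x1^2 + x2^2 - d3^2) = 0)
    (hrk : (!![(1:ℚ), d1, x1, x1*d1, x1^2, d1^2, x1^2*d1^2;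
        1, d2, x2, x2*d2, x2^2, d2^2, x2^2*d2^2;
        1, d3, x3, x3*d3, x3^2, d3^2, x3^2*d3^2]).rank = 1)
    : (x2^2 + x3^2 - d1^2) = 0 ∧ (x3^2 + x1^2 - d2^2) = 0 ∧ (x1^2 + x2^2 - d3^2) = 0 := by
  have hrow := row_eq_of_rank_le_one_of_col_eq_one _ hrk.le 0 (by simp [Fin.forall_fin_succ])
  have h12 := hrow 0 1
  have h23 := hrow 1 2
  have hd12 : d1 = d2 := congrFun h12 1
  have hd23 : d2 = d3 := congrFun h23 1
  have hx12 : x1 = x2 := congrFun h12 2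
  have hx23 : x2 = x3 := congrFun h23 2
  subst hd12 hd23 hx12 hx23
  exact ⟨by linarith, by linarith, by linarith⟩

theorem rank_one_case_euler
    (x1 x2 x3 d1 d2 d3 : ℚ)
    (h2 : (x2^2 + x3^2 - d1^2) + (x3^2 + x1^2 - d2^2) + (x1^2 + x2^2 - d3^2) = 0)
    (h3 : d1 * (x2^2 + x3^2 - d1^2) + d2 * (x3^2 + x1^2 - d2^2) + d3 * (x1^2 + x2^2 - d3^2) = 0)
    (h4 : x1 * (x2^2 + x3^2 - d1^2) + x2 * (x3^2 + x1^2 - d2^2) + x3 * (x1^2 + x2^2 - d3^2) = 0)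
    (h5 : x1 * d1 * (x2^2 + x3^2 - d1^2) + x2 * d2 * (x3^2 + x1^2 - d2^2) + x3 * d3 * (x1^2 + x2^2 - d3^2) = 0)
    (h6 : x1^2 * (x2^2 + x3^2 - d1^2) + x2^2 * (x3^2 + x1^2 - d2^2) + x3^2 * (x1^2 + x2^2 - d3^2) = 0)
    (h7 : d1^2 * (x2^2 + x3^2 - d1^2) + d2^2 * (x3^2 + x1^2 - d2^2) + d3^2 * (x1^2 + x2^2 - d3^2) = 0)
    (h8 : x1^2 * d1^2 * (x2^2 + x3^2 - d1^2) + x2^2 * d2^2 * (x3^2 + x1^2 - d2^2) + x3^2 * d3^2 * (x1^2 + x2^2 - d3^2) = 0)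
    (hrk : (!![(1:ℚ), d1, x1, x1*d1, x1^2, d1^2, x1^2*d1^2;
        1, d2, x2, x2*d2, x2^2, d2^2, x2^2*d2^2;
        1, d3, x3, x3*d3, x3^2, d3^2, x3^2*d3^2]).rank = 1)
    : (x2^2 + x3^2 - d1^2) = 0 ∧ (x3^2 + x1^2 - d2^2) = 0 ∧ (x1^2 + x2^2 - d3^2) = 0 :=
  rank_one_case_euler_general x1 x2 x3 d1 d2 d3 h2 hrk
end

section
/- If rational numbers x1,x2,x3,d1,d2,d3,L satisfy the perfect cuboid factor equations p̃1 = p̃2 = p̃3 = p̃4 = p̃5 = p̃6 = p̃7 = p̃8 = 0 and the 3×7 matrix N whose i-th row is (1, d_i, x_i, x_i·d_i, x_i², d_i², x_i²·d_i²) has rank N = 1, then p0 = p1 = p2 = p3 = 0. -/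
/-!
A rank-one matrix with a column of ones has all rows equal: every row is a multiple of one
vector, and the column of ones pins the multiplier. Hence `x1 = x2 = x3` and `d1 = d2 = d3`,
so `p1 = p2 = p3` and `p̃2 = 3 p1` forces them to vanish; `p̃1 = p0` is a hypothesis.
-/

theorem Matrix.row_eq_of_rank_le_one_of_col_eq_one_s6 {K m n : Type*} [Field K] [Finite m]
    [Fintype n] {M : Matrix m n K} (hM : M.rank ≤ 1) {j : n} (hj : ∀ i, M i j = 1) (i i' : m) :
    M i = M i' := by
  rw [rank_eq_finrank_span_row, finrank_le_one_iff] at hM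
  obtain ⟨v, hv⟩ := hM
  have hrow (i : m) : ∃ c : K, c • (v : n → K) = M i := by
    obtain ⟨c, hc⟩ := hv ⟨M i, Submodule.subset_span ⟨i, rfl⟩⟩
    exact ⟨c, congrArg Subtype.val hc⟩
  obtain ⟨c, hc⟩ := hrow i
  obtain ⟨c', hc'⟩ := hrow i'
  have h : c * v.1 j = 1 := by rw [← hj i, ← hc]; rfl
  have h' : c' * v.1 j = 1 := by rw [← hj i', ← hc']; rfl
  have hvj : v.1 j ≠ 0 := right_ne_zero_of_mul_eq_one h
  rw [← hc, ← hc', mul_right_cancel₀ hvj (h.trans h'.symm)]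

open Matrix

theorem rank_one_case_perfect_general
    (x1 x2 x3 d1 d2 d3 L : ℚ)
    (h1 : (x1^2 + x2^2 + x3^2 - L^2) = 0)
    (h2 : (x2^2 + x3^2 - d1^2) + (x3^2 + x1^2 - d2^2) + (x1^2 + x2^2 - d3^2) = 0)
    (hrk : (!![(1:ℚ), d1, x1, x1*d1, x1^2, d1^2, x1^2*d1^2;
        1, d2, x2, x2*d2, x2^2, d2^2, x2^2*d2^2;
        1, d3, x3, x3*d3, x3^2, d3^2, x3^2*d3^2]).rank = 1)
    : (x1^2 + x2^2 + x3^2 - L^2) = 0 ∧ (x2^2 + x3^2 - d1^2) = 0 ∧ (x3^2 + x1^2 - d2^2) = 0 ∧ (x1^2 + x2^2 - d3^2) = 0 := by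
  have hrow := row_eq_of_rank_le_one_of_col_eq_one_s6 hrk.le (j := 0) (by intro i; fin_cases i <;> rfl)
  have hd2 : d2 = d1 := congrFun (hrow 1 0) 1
  have hd3 : d3 = d1 := congrFun (hrow 2 0) 1
  have hx2 : x2 = x1 := congrFun (hrow 1 0) 2
  have hx3 : x3 = x1 := congrFun (hrow 2 0) 2
  subst hd2 hd3 hx2 hx3
  refine ⟨h1, ?_, ?_, ?_⟩ <;> linarith

theorem rank_one_case_perfect
    (x1 x2 x3 d1 d2 d3 L : ℚ)
    (h1 : (x1^2 + x2^2 + x3^2 - L^2) = 0)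
    (h2 : (x2^2 + x3^2 - d1^2) + (x3^2 + x1^2 - d2^2) + (x1^2 + x2^2 - d3^2) = 0)
    (h3 : d1 * (x2^2 + x3^2 - d1^2) + d2 * (x3^2 + x1^2 - d2^2) + d3 * (x1^2 + x2^2 - d3^2) = 0)
    (h4 : x1 * (x2^2 + x3^2 - d1^2) + x2 * (x3^2 + x1^2 - d2^2) + x3 * (x1^2 + x2^2 - d3^2) = 0)
    (h5 : x1 * d1 * (x2^2 + x3^2 - d1^2) + x2 * d2 * (x3^2 + x1^2 - d2^2) + x3 * d3 * (x1^2 + x2^2 - d3^2) = 0)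
    (h6 : x1^2 * (x2^2 + x3^2 - d1^2) + x2^2 * (x3^2 + x1^2 - d2^2) + x3^2 * (x1^2 + x2^2 - d3^2) = 0)
    (h7 : d1^2 * (x2^2 + x3^2 - d1^2) + d2^2 * (x3^2 + x1^2 - d2^2) + d3^2 * (x1^2 + x2^2 - d3^2) = 0)
    (h8 : x1^2 * d1^2 * (x2^2 + x3^2 - d1^2) + x2^2 * d2^2 * (x3^2 + x1^2 - d2^2) + x3^2 * d3^2 * (x1^2 + x2^2 - d3^2) = 0)
    (hrk : (!![(1:ℚ), d1, x1, x1*d1, x1^2, d1^2, x1^2*d1^2;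
        1, d2, x2, x2*d2, x2^2, d2^2, x2^2*d2^2;
        1, d3, x3, x3*d3, x3^2, d3^2, x3^2*d3^2]).rank = 1)
    : (x1^2 + x2^2 + x3^2 - L^2) = 0 ∧ (x2^2 + x3^2 - d1^2) = 0 ∧ (x3^2 + x1^2 - d2^2) = 0 ∧ (x1^2 + x2^2 - d3^2) = 0 :=
  rank_one_case_perfect_general x1 x2 x3 d1 d2 d3 L h1 h2 hrk
end

section
/- There are no rational numbers x1,x2,x3,d1,d2,d3 satisfying the Euler factor equations p̃2 = p̃3 = p̃4 = p̃5 = p̃6 = p̃7 = p̃8 = 0 such that the 3×2 matrix N1 with rows (1, d_i) has rank 2 and the 3×2 matrix N2 with rows (1, x_i) has rank 1. -/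
/-!
Rank one of `N2` forces `x1 = x2 = x3 =: x`, so every `p_i` becomes `2x² - d_i²`. Then
`p̃7 = 2x² p̃2 - Σ p_i²`, so `p̃2 = p̃7 = 0` gives `d_i² = 2x²`; since `2` is not a rational
square, all `d_i` vanish and `N1` has rank at most one.
-/

open Matrix

section Field

variable {K : Type*} [Field K]

theorem two_le_rank_of_det_ne_zero {m : Type*} (M : Matrix m (Fin 2) K) (i j : m)
    (h : (M.submatrix ![i, j] id).det ≠ 0) : 2 ≤ M.rank := by
  calc 2 = (M.submatrix ![i, j] id).rank := by
        simpa using (rank_of_isUnit _ ((isUnit_iff_isUnit_det _).mpr h.isUnit)).symm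
    _ ≤ M.rank := rank_submatrix_le M _ _

theorem rank_ones_column_le_one_iff (a b c : K) :
    (!![1, a; 1, b; 1, c]).rank ≤ 1 ↔ a = b ∧ a = c := by
  constructor
  · intro h
    constructor <;> by_contra hne
    · have := two_le_rank_of_det_ne_zero !![1, a; 1, b; 1, c] 0 1 (by
        rw [det_fin_two]; simpa [sub_eq_zero] using Ne.symm hne)
      omega
    · have := two_le_rank_of_det_ne_zero !![1, a; 1, b; 1, c] 0 2 (by
        rw [det_fin_two]; simpa [sub_eq_zero] using Ne.symm hne)
      omega
  · rintro ⟨rfl, rfl⟩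
    have : !![1, a; 1, a; 1, a] = vecMulVec ![1, 1, 1] ![1, a] := by
      ext i j
      fin_cases i <;> fin_cases j <;> simp [vecMulVec]
    exact this ▸ rank_vecMulVec_le _ _

theorem eq_zero_of_sq_eq_mul_sq {a d x : K} (ha : ¬IsSquare a)
    (h : d ^ 2 = a * x ^ 2) : d = 0 := by
  by_cases hx : x = 0
  · simpa [hx] using h
  · exact absurd ⟨d / x, by field_simp; linear_combination -h⟩ ha

end Field

theorem eq_of_sum_sub_eq_zero_of_sum_mul_sub_eq_zero {R : Type*} [CommRing R] [LinearOrder R]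
    [IsStrictOrderedRing R] {a b c s : R} (hsum : (s - a) + (s - b) + (s - c) = 0)
    (hw : a * (s - a) + b * (s - b) + c * (s - c) = 0) : a = s ∧ b = s ∧ c = s := by
  have hsq : (s - a) ^ 2 + (s - b) ^ 2 + (s - c) ^ 2 = 0 := by
    linear_combination s * hsum - hw
  have ha := sq_nonneg (s - a)
  have hb := sq_nonneg (s - b)
  have hc := sq_nonneg (s - c)
  refine ⟨?_, ?_, ?_⟩ <;> rw [eq_comm, ← sub_eq_zero, ← sq_eq_zero_iff] <;> linarith

theorem Rat.not_isSquare_two : ¬IsSquare (2 : ℚ) := by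
  exact_mod_cast Rat.isSquare_natCast_iff.not.mpr Nat.prime_two.not_isSquare

theorem no_solution_rankN1_two_rankN2_one_euler :
    ¬ ∃ x1 x2 x3 d1 d2 d3 : ℚ,
      (x2^2 + x3^2 - d1^2) + (x3^2 + x1^2 - d2^2) + (x1^2 + x2^2 - d3^2) = 0 ∧
      d1 * (x2^2 + x3^2 - d1^2) + d2 * (x3^2 + x1^2 - d2^2) + d3 * (x1^2 + x2^2 - d3^2) = 0 ∧
      x1 * (x2^2 + x3^2 - d1^2) + x2 * (x3^2 + x1^2 - d2^2) + x3 * (x1^2 + x2^2 - d3^2) = 0 ∧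
      x1 * d1 * (x2^2 + x3^2 - d1^2) + x2 * d2 * (x3^2 + x1^2 - d2^2) + x3 * d3 * (x1^2 + x2^2 - d3^2) = 0 ∧
      x1^2 * (x2^2 + x3^2 - d1^2) + x2^2 * (x3^2 + x1^2 - d2^2) + x3^2 * (x1^2 + x2^2 - d3^2) = 0 ∧
      d1^2 * (x2^2 + x3^2 - d1^2) + d2^2 * (x3^2 + x1^2 - d2^2) + d3^2 * (x1^2 + x2^2 - d3^2) = 0 ∧
      x1^2 * d1^2 * (x2^2 + x3^2 - d1^2) + x2^2 * d2^2 * (x3^2 + x1^2 - d2^2) + x3^2 * d3^2 * (x1^2 + x2^2 - d3^2) = 0 ∧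
      (!![(1:ℚ), d1; 1, d2; 1, d3]).rank = 2 ∧
      (!![(1:ℚ), x1; 1, x2; 1, x3]).rank = 1 := by
  rintro ⟨x, _, _, d1, d2, d3, hp2, -, -, -, -, hp7, -, hN1, hN2⟩
  obtain ⟨rfl, rfl⟩ := (rank_ones_column_le_one_iff _ _ _).mp hN2.le
  obtain ⟨hd1, hd2, hd3⟩ := eq_of_sum_sub_eq_zero_of_sum_mul_sub_eq_zero hp2 hp7
  have hd_zero {d : ℚ} (hd : d ^ 2 = x ^ 2 + x ^ 2) : d = 0 :=
    eq_zero_of_sq_eq_mul_sq (x := x) Rat.not_isSquare_two (by linear_combination hd)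
  have hN1_le : (!![(1:ℚ), d1; 1, d2; 1, d3]).rank ≤ 1 :=
    (rank_ones_column_le_one_iff _ _ _).mpr
      ⟨(hd_zero hd1).trans (hd_zero hd2).symm, (hd_zero hd1).trans (hd_zero hd3).symm⟩
  omega
end

section
/- There are no rational numbers x1,x2,x3,d1,d2,d3,L satisfying the perfect cuboid factor equations p̃1 = p̃2 = p̃3 = p̃4 = p̃5 = p̃6 = p̃7 = p̃8 = 0 such that the 3×2 matrix N1 with rows (1, d_i) has rank 2 and the 3×2 matrix N2 with rows (1, x_i) has rank 1. -/
/-!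
If the matrix with rows `(1, xᵢ)` has rank one, all edges equal some `x`, and then
`pᵢ = 2x² - dᵢ²`. The combination `2x² · p̃₂ - p̃₇ = p₁² + p₂² + p₃²` forces every `pᵢ`
to vanish, i.e. `dᵢ² = 2x²`; as `2` is not a rational square, `x = 0` and all `dᵢ = 0`.
But then the matrix with rows `(1, dᵢ)` has rank at most one, not two.
-/

open Matrix Module

theorem eq_zero_of_sq_eq_mul_sq_s8 {K : Type*} [Field K] {c q r : K} (hc : ¬IsSquare c)
    (h : q ^ 2 = c * r ^ 2) : r = 0 := by
  by_contra hr
  exact hc ⟨q / r, by field_simp; linear_combination -h⟩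

theorem eq_of_sum_sub_eq_zero_of_sum_mul_sub_eq_zero_s8 {R ι : Type*} [CommRing R] [LinearOrder R]
    [IsStrictOrderedRing R] [Fintype ι] (a : ι → R) (s : R) (h₁ : ∑ i, (s - a i) = 0)
    (h₂ : ∑ i, a i * (s - a i) = 0) (i : ι) : a i = s := by
  have hsq : ∑ i, (s - a i) ^ 2 = 0 := by
    have : ∑ i, (s - a i) ^ 2 = s * ∑ i, (s - a i) - ∑ i, a i * (s - a i) := by
      rw [Finset.mul_sum, ← Finset.sum_sub_distrib]
      exact Finset.sum_congr rfl fun i _ => by ring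
    rw [this, h₁, h₂]; ring
  have := (Finset.sum_eq_zero_iff_of_nonneg fun i _ => sq_nonneg (s - a i)).mp hsq i
    (Finset.mem_univ i)
  linear_combination -(pow_eq_zero_iff two_ne_zero).mp this

theorem Matrix.rank_of_one_cons_le_one_iff {K m : Type*} [Field K] [Fintype m] (a : m → K) :
    (Matrix.of fun i => ![1, a i]).rank ≤ 1 ↔ ∀ i j, a i = a j := by
  have hcols : Set.range (Matrix.of fun i => ![(1 : K), a i]).col = {1, a} := by
    rw [show (Matrix.of fun i => ![(1 : K), a i]).col = ![1, a] by ext j i; fin_cases j <;> rfl,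
      range_cons_cons_empty]
  rw [rank_eq_finrank_span_cols, hcols]
  constructor
  · intro h i j
    have hone : (1 : m → K) ≠ 0 := fun h0 => one_ne_zero (congrFun h0 i)
    have hspan : K ∙ (1 : m → K) = Submodule.span K {1, a} :=
      Submodule.eq_of_le_of_finrank_le (Submodule.span_mono (by simp))
        (h.trans (finrank_span_singleton hone).ge)
    obtain ⟨c, hc⟩ := Submodule.mem_span_singleton.mp
      (hspan ▸ Submodule.subset_span (by simp) : a ∈ K ∙ (1 : m → K))
    simp [← hc]
  · intro h
    have hmem : a ∈ K ∙ (1 : m → K) := by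
      rcases isEmpty_or_nonempty m with hm | ⟨⟨i⟩⟩
      · simp [Subsingleton.elim a 0]
      · exact Submodule.mem_span_singleton.mpr ⟨a i, funext fun j => by simp [h i j]⟩
    rw [Set.pair_comm, Submodule.span_insert_eq_span hmem]
    simpa using finrank_span_le_card ({1} : Set (m → K))

theorem Matrix.rank_of_one_cons_three_le_one_iff {K : Type*} [Field K] (a b c : K) :
    (!![1, a; 1, b; 1, c]).rank ≤ 1 ↔ a = b ∧ b = c := by
  rw [show !![1, a; 1, b; 1, c] = Matrix.of fun i => ![1, ![a, b, c] i] by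
    ext i j; fin_cases i <;> fin_cases j <;> rfl, rank_of_one_cons_le_one_iff]
  refine ⟨fun h => ⟨h 0 1, h 1 2⟩, ?_⟩
  rintro ⟨rfl, rfl⟩ i j
  fin_cases i <;> fin_cases j <;> rfl

theorem no_solution_rankN1_two_rankN2_one_perfect :
    ¬ ∃ x1 x2 x3 d1 d2 d3 L : ℚ,
      (x1^2 + x2^2 + x3^2 - L^2) = 0 ∧
      (x2^2 + x3^2 - d1^2) + (x3^2 + x1^2 - d2^2) + (x1^2 + x2^2 - d3^2) = 0 ∧
      d1 * (x2^2 + x3^2 - d1^2) + d2 * (x3^2 + x1^2 - d2^2) + d3 * (x1^2 + x2^2 - d3^2) = 0 ∧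
      x1 * (x2^2 + x3^2 - d1^2) + x2 * (x3^2 + x1^2 - d2^2) + x3 * (x1^2 + x2^2 - d3^2) = 0 ∧
      x1 * d1 * (x2^2 + x3^2 - d1^2) + x2 * d2 * (x3^2 + x1^2 - d2^2) + x3 * d3 * (x1^2 + x2^2 - d3^2) = 0 ∧
      x1^2 * (x2^2 + x3^2 - d1^2) + x2^2 * (x3^2 + x1^2 - d2^2) + x3^2 * (x1^2 + x2^2 - d3^2) = 0 ∧
      d1^2 * (x2^2 + x3^2 - d1^2) + d2^2 * (x3^2 + x1^2 - d2^2) + d3^2 * (x1^2 + x2^2 - d3^2) = 0 ∧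
      x1^2 * d1^2 * (x2^2 + x3^2 - d1^2) + x2^2 * d2^2 * (x3^2 + x1^2 - d2^2) + x3^2 * d3^2 * (x1^2 + x2^2 - d3^2) = 0 ∧
      (!![(1:ℚ), d1; 1, d2; 1, d3]).rank = 2 ∧
      (!![(1:ℚ), x1; 1, x2; 1, x3]).rank = 1 := by
  rintro ⟨x, x2, x3, d1, d2, d3, L, -, h₂, -, -, -, -, h₇, -, hN₁, hN₂⟩
  obtain ⟨rfl, rfl⟩ := (rank_of_one_cons_three_le_one_iff x x2 x3).mp hN₂.le
  have hsq : ∀ i, ![d1, d2, d3] i ^ 2 = 2 * x ^ 2 :=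
    eq_of_sum_sub_eq_zero_of_sum_mul_sub_eq_zero_s8 (fun i => ![d1, d2, d3] i ^ 2) (2 * x ^ 2)
      (by simp only [Fin.sum_univ_three, cons_val_zero, cons_val_one, cons_val_two, tail_cons,
            head_cons]
          linear_combination h₂)
      (by simp only [Fin.sum_univ_three, cons_val_zero, cons_val_one, cons_val_two, tail_cons,
            head_cons]
          linear_combination h₇)
  have hx : x = 0 := eq_zero_of_sq_eq_mul_sq_s8 (by norm_num) (hsq 0)
  have hd : ∀ i, ![d1, d2, d3] i = 0 := fun i =>
    (pow_eq_zero_iff two_ne_zero).mp (by simp [hsq i, hx])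
  have hN₁_le : (!![(1:ℚ), d1; 1, d2; 1, d3]).rank ≤ 1 :=
    (rank_of_one_cons_three_le_one_iff d1 d2 d3).mpr
      ⟨(hd 0).trans (hd 1).symm, (hd 1).trans (hd 2).symm⟩
  omega
end

section
/- There are no rational numbers x1,x2,x3,d1,d2,d3,L satisfying the perfect cuboid factor equations p̃1 = p̃2 = p̃3 = p̃4 = p̃5 = p̃6 = p̃7 = p̃8 = 0 such that the 3×2 matrix N1 with rows (1, d_i) has rank 1 and the 3×2 matrix N2 with rows (1, x_i) has rank 2. -/
/-!
Rank one of `N1` forces `d1 = d2 = d3 =: d`, so `p_i = S - d² - x_i²` with `S = x1² + x2² + x3²`.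
Eliminating `d²` between `p̃2 = 0` and `p̃6 = 0` gives `S² = 3 (x1⁴ + x2⁴ + x3⁴)`, the equality case
of Cauchy–Schwarz, hence `x1² = x2² = x3²`. Then `p̃1 = 0` reads `L² = 3 x1²`, and since `3` is not a
rational square all `x_i` vanish, so `N2` has rank at most one.
-/

open Matrix

theorem Matrix.eq_of_rank_le_one_of_forall_apply_zero_eq_one {m K : Type*} [Fintype m] [Field K]
    {M : Matrix m (Fin 2) K} (hM : ∀ i, M i 0 = 1) (hr : M.rank ≤ 1) (i j : m) :
    M i 1 = M j 1 := by
  by_contra hne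
  have hdet : (M.submatrix ![i, j] id).det ≠ 0 := by
    rw [det_fin_two]
    simpa [hM, sub_eq_zero] using Ne.symm hne
  have hrank : (M.submatrix ![i, j] id).rank = 2 := by
    simpa using rank_of_isUnit _ ((isUnit_iff_isUnit_det _).mpr hdet.isUnit)
  have := rank_submatrix_le M ![i, j] id
  omega

theorem Matrix.rank_le_one_of_forall_row_eq {m n R : Type*} [Fintype n] [CommSemiring R]
    [StrongRankCondition R] {M : Matrix m n R} (r : n → R) (hM : ∀ i, M i = r) :
    M.rank ≤ 1 := by
  have : M = vecMulVec (fun _ => 1) r := by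
    ext i j
    simp [vecMulVec_apply, hM]
  exact this ▸ rank_vecMulVec_le _ _

theorem eq_zero_of_sq_eq_mul_sq_s10 {K : Type*} [Field K] {k x y : K} (hk : ¬IsSquare k)
    (h : y ^ 2 = k * x ^ 2) : x = 0 := by
  by_contra hx
  exact hk ⟨y / x, by field_simp; linear_combination -h⟩

theorem Rat.not_isSquare_three : ¬IsSquare (3 : ℚ) := by
  rw [Rat.isSquare_ofNat_iff]
  exact Nat.prime_three.not_isSquare

theorem eq_and_eq_of_sq_add_add_eq_three_mul {K : Type*} [Field K] [LinearOrder K]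
    [IsStrictOrderedRing K] {a b c : K} (h : (a + b + c) ^ 2 = 3 * (a ^ 2 + b ^ 2 + c ^ 2)) :
    a = b ∧ b = c := by
  have hsum : (a - b) ^ 2 + (b - c) ^ 2 + (c - a) ^ 2 = 0 := by linear_combination -h
  have hab : (a - b) ^ 2 = 0 := by
    nlinarith [sq_nonneg (a - b), sq_nonneg (b - c), sq_nonneg (c - a)]
  have hbc : (b - c) ^ 2 = 0 := by
    nlinarith [sq_nonneg (a - b), sq_nonneg (b - c), sq_nonneg (c - a)]
  exact ⟨sub_eq_zero.mp (pow_eq_zero_iff two_ne_zero |>.mp hab),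
    sub_eq_zero.mp (pow_eq_zero_iff two_ne_zero |>.mp hbc)⟩

theorem no_solution_rankN1_one_rankN2_two_perfect :
    ¬ ∃ x1 x2 x3 d1 d2 d3 L : ℚ,
      (x1^2 + x2^2 + x3^2 - L^2) = 0 ∧
      (x2^2 + x3^2 - d1^2) + (x3^2 + x1^2 - d2^2) + (x1^2 + x2^2 - d3^2) = 0 ∧
      d1 * (x2^2 + x3^2 - d1^2) + d2 * (x3^2 + x1^2 - d2^2) + d3 * (x1^2 + x2^2 - d3^2) = 0 ∧
      x1 * (x2^2 + x3^2 - d1^2) + x2 * (x3^2 + x1^2 - d2^2) + x3 * (x1^2 + x2^2 - d3^2) = 0 ∧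
      x1 * d1 * (x2^2 + x3^2 - d1^2) + x2 * d2 * (x3^2 + x1^2 - d2^2) + x3 * d3 * (x1^2 + x2^2 - d3^2) = 0 ∧
      x1^2 * (x2^2 + x3^2 - d1^2) + x2^2 * (x3^2 + x1^2 - d2^2) + x3^2 * (x1^2 + x2^2 - d3^2) = 0 ∧
      d1^2 * (x2^2 + x3^2 - d1^2) + d2^2 * (x3^2 + x1^2 - d2^2) + d3^2 * (x1^2 + x2^2 - d3^2) = 0 ∧
      x1^2 * d1^2 * (x2^2 + x3^2 - d1^2) + x2^2 * d2^2 * (x3^2 + x1^2 - d2^2) + x3^2 * d3^2 * (x1^2 + x2^2 - d3^2) = 0 ∧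
      (!![(1:ℚ), d1; 1, d2; 1, d3]).rank = 1 ∧
      (!![(1:ℚ), x1; 1, x2; 1, x3]).rank = 2 := by
  rintro ⟨x1, x2, x3, d1, d2, d3, L, h1, h2, -, -, -, h6, -, -, hN1, hN2⟩
  have hd := eq_of_rank_le_one_of_forall_apply_zero_eq_one
    (M := !![(1:ℚ), d1; 1, d2; 1, d3]) (fun i => by fin_cases i <;> rfl) hN1.le
  obtain rfl : d2 = d1 := (hd 0 1).symm
  obtain rfl : d3 = d2 := (hd 0 2).symm
  obtain ⟨h12, h23⟩ : x1 ^ 2 = x2 ^ 2 ∧ x2 ^ 2 = x3 ^ 2 :=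
    eq_and_eq_of_sq_add_add_eq_three_mul (by linear_combination 3 * h6 - (x1^2 + x2^2 + x3^2) * h2)
  have hL : L ^ 2 = 3 * x1 ^ 2 := by linear_combination -h1 - 2 * h12 - h23
  have hx1 : x1 = 0 := eq_zero_of_sq_eq_mul_sq_s10 Rat.not_isSquare_three hL
  have hx2 : x2 = 0 := pow_eq_zero_iff two_ne_zero |>.mp (by rw [← h12, hx1]; ring)
  have hx3 : x3 = 0 := pow_eq_zero_iff two_ne_zero |>.mp (by rw [← h23, ← h12, hx1]; ring)
  subst hx1 hx2 hx3
  have : (!![(1:ℚ), 0; 1, 0; 1, 0]).rank ≤ 1 :=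
    rank_le_one_of_forall_row_eq ![1, 0] (fun i => by fin_cases i <;> rfl)
  omega
end

section
/- There are no rational numbers x1,x2,x3,d1,d2,d3 with x1 > 0, x2 > 0, x3 > 0, d1 > 0, d2 > 0, d3 > 0 satisfying the Euler factor equations p̃2 = p̃3 = p̃4 = p̃5 = p̃6 = p̃7 = p̃8 = 0 such that the 3×2 matrix N1 with rows (1, d_i) has rank 2, the 3×2 matrix N2 with rows (1, x_i) has rank 2, and the 3×7 matrix N with rows (1, d_i, x_i, x_i·d_i, x_i², d_i², x_i²·d_i²) has rank N ≤ 2. -/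
/-!
Since `rank N ≤ 2`, every 3 × 3 minor of `N` vanishes. The minor on the columns `(1, d, d²)` is a
Vandermonde determinant, so two of the `dᵢ` coincide, and since `rank N₁ = 2` the third one differs.
The minor on the columns `(1, d, x)` then forces the two rows with equal `d` to have equal `x` as
well. With `d₁ = d₂ = d`, `x₁ = x₂` the Euler equations give `p̃₃ - d p̃₂ = (d₃ - d) p₃`, hence
`p₃ = 0`, i.e. `d₃² = 2 x₁²`, which has no rational solution with `x₁ ≠ 0`.
-/

open Matrix

theorem Rat.sq_ne_two_mul_sq {s u : ℚ} (hu : u ≠ 0) : s ^ 2 ≠ 2 * u ^ 2 := fun h =>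
  Rat.not_isSquare_two ⟨s / u, by field_simp; linear_combination -h⟩

theorem Matrix.det_submatrix_eq_zero_of_rank_lt {K m n : Type*} [Field K] [Fintype m]
    [DecidableEq m] [Fintype n] {A : Matrix m n K} (hA : A.rank < Fintype.card m) (c : m → n) :
    (A.submatrix id c).det = 0 := by
  by_contra h
  have hunit : IsUnit (A.submatrix id c) := (isUnit_iff_isUnit_det _).2 (isUnit_iff_ne_zero.2 h)
  have := rank_submatrix_le A id c
  rw [rank_of_isUnit _ hunit] at this
  exact this.not_gt hA

theorem Matrix.rank_of_const_rows_le_one {R m n : Type*} [CommSemiring R] [StrongRankCondition R]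
    [Fintype n] (v : n → R) : (Matrix.of fun (_ : m) => v).rank ≤ 1 := by
  simpa [vecMulVec] using rank_vecMulVec_le (fun _ : m => (1 : R)) v

theorem false_of_two_equal_d {x1 x2 x3 d d3 : ℚ} (hx1 : x1 ≠ 0) (hd : d ≠ d3)
    (hminor : (d3 - d) * (x2 - x1) = 0)
    (h2 : (x2^2 + x3^2 - d^2) + (x3^2 + x1^2 - d^2) + (x1^2 + x2^2 - d3^2) = 0)
    (h3 : d * (x2^2 + x3^2 - d^2) + d * (x3^2 + x1^2 - d^2) + d3 * (x1^2 + x2^2 - d3^2) = 0) :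
    False := by
  have hd3 : d3 - d ≠ 0 := sub_ne_zero.2 hd.symm
  obtain rfl : x2 = x1 := sub_eq_zero.1 ((mul_eq_zero.1 hminor).resolve_left hd3)
  have hp3 : (d3 - d) * (x2 ^ 2 + x2 ^ 2 - d3 ^ 2) = 0 := by linear_combination h3 - d * h2
  have hsq : x2 ^ 2 + x2 ^ 2 - d3 ^ 2 = 0 := (mul_eq_zero.1 hp3).resolve_left hd3
  exact Rat.sq_ne_two_mul_sq (s := d3) hx1 (by linear_combination -hsq)

theorem no_positive_solution_rank_two_two_euler :
    ¬ ∃ x1 x2 x3 d1 d2 d3 : ℚ,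
      0 < x1 ∧
      0 < x2 ∧
      0 < x3 ∧
      0 < d1 ∧
      0 < d2 ∧
      0 < d3 ∧
      (x2^2 + x3^2 - d1^2) + (x3^2 + x1^2 - d2^2) + (x1^2 + x2^2 - d3^2) = 0 ∧
      d1 * (x2^2 + x3^2 - d1^2) + d2 * (x3^2 + x1^2 - d2^2) + d3 * (x1^2 + x2^2 - d3^2) = 0 ∧
      x1 * (x2^2 + x3^2 - d1^2) + x2 * (x3^2 + x1^2 - d2^2) + x3 * (x1^2 + x2^2 - d3^2) = 0 ∧
      x1 * d1 * (x2^2 + x3^2 - d1^2) + x2 * d2 * (x3^2 + x1^2 - d2^2) + x3 * d3 * (x1^2 + x2^2 - d3^2) = 0 ∧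
      x1^2 * (x2^2 + x3^2 - d1^2) + x2^2 * (x3^2 + x1^2 - d2^2) + x3^2 * (x1^2 + x2^2 - d3^2) = 0 ∧
      d1^2 * (x2^2 + x3^2 - d1^2) + d2^2 * (x3^2 + x1^2 - d2^2) + d3^2 * (x1^2 + x2^2 - d3^2) = 0 ∧
      x1^2 * d1^2 * (x2^2 + x3^2 - d1^2) + x2^2 * d2^2 * (x3^2 + x1^2 - d2^2) + x3^2 * d3^2 * (x1^2 + x2^2 - d3^2) = 0 ∧
      (!![(1:ℚ), d1; 1, d2; 1, d3]).rank = 2 ∧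
      (!![(1:ℚ), x1; 1, x2; 1, x3]).rank = 2 ∧
      (!![(1:ℚ), d1, x1, x1*d1, x1^2, d1^2, x1^2*d1^2;
        1, d2, x2, x2*d2, x2^2, d2^2, x2^2*d2^2;
        1, d3, x3, x3*d3, x3^2, d3^2, x3^2*d3^2]).rank ≤ 2 := by
  rintro ⟨x1, x2, x3, d1, d2, d3, hx1, hx2, hx3, -, -, -, h2, h3, -, -, -, -, -, hN1, -, hN⟩
  replace hN := hN.trans_lt (by simp : 2 < Fintype.card (Fin 3))
  have hvandermonde := det_submatrix_eq_zero_of_rank_lt hN ![0, 1, 5]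
  have hminor := det_submatrix_eq_zero_of_rank_lt hN ![0, 1, 2]
  simp only [Fin.isValue, det_fin_three, submatrix_apply, id_eq, cons_val_zero, of_apply,
    cons_val', cons_val_fin_one, cons_val_one, one_mul, cons_val, mul_one] at hvandermonde hminor
  have hd : ¬(d1 = d2 ∧ d2 = d3) := by
    rintro ⟨rfl, rfl⟩
    have hconst : !![(1:ℚ), d1; 1, d1; 1, d1] = Matrix.of fun _ : Fin 3 => ![1, d1] := by
      ext i j; fin_cases i <;> rfl
    have := hconst ▸ rank_of_const_rows_le_one (m := Fin 3) ![1, d1]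
    omega
  obtain h12 | h13 | h23 : d1 = d2 ∨ d1 = d3 ∨ d2 = d3 := by
    have : (d2 - d1) * (d3 - d1) * (d3 - d2) = 0 := by linear_combination hvandermonde
    simpa [sub_eq_zero, eq_comm, or_assoc] using this
  · subst h12
    exact false_of_two_equal_d hx1.ne' (fun h => hd ⟨rfl, h⟩) (by linear_combination -hminor) h2 h3
  -- The other two cases are the first one after a cyclic relabelling of the rows.
  · subst h13
    exact false_of_two_equal_d (x1 := x3) (x2 := x1) (x3 := x2) (d := d1) (d3 := d2) hx3.ne'
      (fun h => hd ⟨h, h.symm⟩) (by linear_combination -hminor)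
      (by linear_combination h2) (by linear_combination h3)
  · subst h23
    exact false_of_two_equal_d (x1 := x2) (x2 := x3) (x3 := x1) (d := d2) (d3 := d1) hx2.ne'
      (fun h => hd ⟨h.symm, rfl⟩) (by linear_combination -hminor)
      (by linear_combination h2) (by linear_combination h3)
end

section
/- For rational numbers x1,x2,x3,d1,d2,d3,L with x1 > 0, x2 > 0, x3 > 0, d1 > 0, d2 > 0, d3 > 0, the perfect cuboid equations p0 = p1 = p2 = p3 = 0 hold if and only if the perfect cuboid factor equations p̃1 = p̃2 = p̃3 = p̃4 = p̃5 = p̃6 = p̃7 = p̃8 = 0 hold. -/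
/-!
Writing `S = x1² + x2² + x3²`, the definition of `p_i` gives `d_i² = S - x_i² - p_i`, so
`p̃7 = S · p̃2 - p̃6 - (p1² + p2² + p3²)`. Hence `p̃2 = p̃6 = p̃7 = 0` forces the sum of squares
`p1² + p2² + p3²` to vanish, i.e. `p1 = p2 = p3 = 0`; the converse is immediate since every
factor polynomial is a combination of `p0, p1, p2, p3`.
-/

section OrderedRing

variable {R : Type*} [CommRing R] [LinearOrder R] [IsStrictOrderedRing R]

theorem sq_add_sq_add_sq_eq_zero_iff {a b c : R} :
    a ^ 2 + b ^ 2 + c ^ 2 = 0 ↔ a = 0 ∧ b = 0 ∧ c = 0 := by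
  rw [add_eq_zero_iff_of_nonneg (by positivity) (sq_nonneg c),
    add_eq_zero_iff_of_nonneg (sq_nonneg a) (sq_nonneg b)]
  simp only [sq_eq_zero_iff, and_assoc]

theorem face_equations_of_factor_equations {x1 x2 x3 d1 d2 d3 : R}
    (h2 : (x2^2 + x3^2 - d1^2) + (x3^2 + x1^2 - d2^2) + (x1^2 + x2^2 - d3^2) = 0)
    (h6 : x1^2 * (x2^2 + x3^2 - d1^2) + x2^2 * (x3^2 + x1^2 - d2^2)
      + x3^2 * (x1^2 + x2^2 - d3^2) = 0)
    (h7 : d1^2 * (x2^2 + x3^2 - d1^2) + d2^2 * (x3^2 + x1^2 - d2^2)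
      + d3^2 * (x1^2 + x2^2 - d3^2) = 0) :
    x2^2 + x3^2 - d1^2 = 0 ∧ x3^2 + x1^2 - d2^2 = 0 ∧ x1^2 + x2^2 - d3^2 = 0 := by
  have sum_sq_eq_zero : (x2^2 + x3^2 - d1^2)^2 + (x3^2 + x1^2 - d2^2)^2
      + (x1^2 + x2^2 - d3^2)^2 = 0 := by
    linear_combination (x1^2 + x2^2 + x3^2) * h2 - h6 - h7
  exact sq_add_sq_add_sq_eq_zero_iff.mp sum_sq_eq_zero

end OrderedRing

theorem perfect_cuboid_equations_iff_factor_equations_general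
    (x1 x2 x3 d1 d2 d3 L : ℚ)
    : (((x1^2 + x2^2 + x3^2 - L^2) = 0 ∧ (x2^2 + x3^2 - d1^2) = 0 ∧ (x3^2 + x1^2 - d2^2) = 0 ∧ (x1^2 + x2^2 - d3^2) = 0)
      ↔
      ((x1^2 + x2^2 + x3^2 - L^2) = 0 ∧ (x2^2 + x3^2 - d1^2) + (x3^2 + x1^2 - d2^2) + (x1^2 + x2^2 - d3^2) = 0 ∧ d1 * (x2^2 + x3^2 - d1^2) + d2 * (x3^2 + x1^2 - d2^2) + d3 * (x1^2 + x2^2 - d3^2) = 0 ∧ x1 * (x2^2 + x3^2 - d1^2) + x2 * (x3^2 + x1^2 - d2^2) + x3 * (x1^2 + x2^2 - d3^2) = 0 ∧ x1 * d1 * (x2^2 + x3^2 - d1^2) + x2 * d2 * (x3^2 + x1^2 - d2^2) + x3 * d3 * (x1^2 + x2^2 - d3^2) = 0 ∧ x1^2 * (x2^2 + x3^2 - d1^2) + x2^2 * (x3^2 + x1^2 - d2^2) + x3^2 * (x1^2 + x2^2 - d3^2) = 0 ∧ d1^2 * (x2^2 + x3^2 - d1^2) + d2^2 * (x3^2 +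 x1^2 - d2^2) + d3^2 * (x1^2 + x2^2 - d3^2) = 0 ∧ x1^2 * d1^2 * (x2^2 + x3^2 - d1^2) + x2^2 * d2^2 * (x3^2 + x1^2 - d2^2) + x3^2 * d3^2 * (x1^2 + x2^2 - d3^2) = 0)) := by
  constructor
  · rintro ⟨h0, h1, h2, h3⟩
    simp only [h0, h1, h2, h3, mul_zero, add_zero, and_self]
  · rintro ⟨h0, h2, -, -, -, h6, h7, -⟩
    exact ⟨h0, face_equations_of_factor_equations h2 h6 h7⟩

theorem perfect_cuboid_equations_iff_factor_equations
    (x1 x2 x3 d1 d2 d3 L : ℚ)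
    (hx1 : 0 < x1)
    (hx2 : 0 < x2)
    (hx3 : 0 < x3)
    (hd1 : 0 < d1)
    (hd2 : 0 < d2)
    (hd3 : 0 < d3)
    : (((x1^2 + x2^2 + x3^2 - L^2) = 0 ∧ (x2^2 + x3^2 - d1^2) = 0 ∧ (x3^2 + x1^2 - d2^2) = 0 ∧ (x1^2 + x2^2 - d3^2) = 0)
      ↔
      ((x1^2 + x2^2 + x3^2 - L^2) = 0 ∧ (x2^2 + x3^2 - d1^2) + (x3^2 + x1^2 - d2^2) + (x1^2 + x2^2 - d3^2) = 0 ∧ d1 * (x2^2 + x3^2 - d1^2) + d2 * (x3^2 + x1^2 - d2^2) + d3 * (x1^2 + x2^2 - d3^2) = 0 ∧ x1 * (x2^2 + x3^2 - d1^2) + x2 * (x3^2 + x1^2 - d2^2) + x3 * (x1^2 + x2^2 - d3^2) = 0 ∧ x1 * d1 * (x2^2 + x3^2 - d1^2) + x2 * d2 * (x3^2 + x1^2 - d2^2) + x3 * d3 * (x1^2 + x2^2 - d3^2) = 0 ∧ x1^2 * (x2^2 + x3^2 - d1^2) + x2^2 * (x3^2 + x1^2 - d2^2) + x3^2 * (x1^2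 + x2^2 - d3^2) = 0 ∧ d1^2 * (x2^2 + x3^2 - d1^2) + d2^2 * (x3^2 + x1^2 - d2^2) + d3^2 * (x1^2 + x2^2 - d3^2) = 0 ∧ x1^2 * d1^2 * (x2^2 + x3^2 - d1^2) + x2^2 * d2^2 * (x3^2 + x1^2 - d2^2) + x3^2 * d3^2 * (x1^2 + x2^2 - d3^2) = 0)) :=
  perfect_cuboid_equations_iff_factor_equations_general x1 x2 x3 d1 d2 d3 L
end
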